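/- arXiv:1905.07889 — 2 statements merged into one kernel-verified Lean document; each statement's English description precedes it below -/
import Mathlib

section
/- Let A be a self-adjoint operator with cyclic vector φ, and B = ⟨φ,·⟩φ. Suppose x_i < x_{i+1} are consecutive eigenvalues of A with no spectrum of A in (x_i, x_{i+1}). Then A+B has exactly one eigenvalue in the open interval (x_i, x_{i+1}). -/
/-!
For `t` in the gap let `f t = ⟪φ, (t - A)⁻¹ φ⟫`, which is real because the resolvent at a real
point is self-adjoint. If `(A + B) ψ = t ψ` then `(t - A) ψ = ⟪φ, ψ⟫ φ`, so `t` is an eigenvalue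
of `A + B` exactly when `f t = 1`. Since `f' t = -‖(t - A)⁻¹ φ‖² < 0`, `f` is strictly decreasing.
Splitting off the component of `φ` along a unit eigenvector `ψ` for an endpoint `x` gives
`f t = |⟪ψ, φ⟫|² / (t - x) + g t` with `g` decreasing as well, and cyclicity of `φ` forces
`⟪ψ, φ⟫ ≠ 0`. Hence `f` runs from `+∞` at `x₁` to `-∞` at `x₂` and takes the value `1` exactly once.
-/

open scoped InnerProductSpace
open Filter Topology Set Module.End

section Resolvent

variable {𝕜 E : Type*} [NontriviallyNormedField 𝕜] [NormedAddCommGroup E] [NormedSpace 𝕜 E]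
  {A : E →L[𝕜] E} {μ : 𝕜}

theorem smul_sub_apply_resolvent (hμ : μ ∈ resolventSet 𝕜 A) (v : E) :
    μ • resolvent A μ v - A (resolvent A μ v) = v := by
  have := congrArg (· v) (Ring.mul_inverse_cancel _ hμ)
  simpa [Algebra.algebraMap_eq_smul_one, resolvent] using this

theorem resolvent_apply_smul_sub (hμ : μ ∈ resolventSet 𝕜 A) (v : E) :
    resolvent A μ (μ • v - A v) = v := by
  have := congrArg (· v) (Ring.inverse_mul_cancel _ hμ)
  simpa [Algebra.algebraMap_eq_smul_one, resolvent] using this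

theorem resolvent_apply_ne_zero (hμ : μ ∈ resolventSet 𝕜 A) {v : E} (hv : v ≠ 0) :
    resolvent A μ v ≠ 0 := fun h0 =>
  hv (by rw [← smul_sub_apply_resolvent hμ v, h0, smul_zero, map_zero, sub_zero])

theorem resolvent_apply_of_apply_eq_smul (hμ : μ ∈ resolventSet 𝕜 A) {x : 𝕜} {ψ : E}
    (hψ : A ψ = x • ψ) : resolvent A μ ψ = (μ - x)⁻¹ • ψ := by
  have h := resolvent_apply_smul_sub hμ ψ
  rw [hψ, ← sub_smul, map_smul] at h
  rcases eq_or_ne (μ - x) 0 with hx | hx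
  · rw [hx, zero_smul] at h
    simp [← h]
  · calc resolvent A μ ψ = (μ - x)⁻¹ • (μ - x) • resolvent A μ ψ := by
          rw [smul_smul, inv_mul_cancel₀ hx, one_smul]
      _ = (μ - x)⁻¹ • ψ := by rw [h]

theorem hasEigenvalue_add_smulRight_iff (hμ : μ ∈ resolventSet 𝕜 A) (ℓ : E →L[𝕜] 𝕜) (v : E) :
    HasEigenvalue ((A + ℓ.smulRight v : E →L[𝕜] E) : E →ₗ[𝕜] E) μ ↔
      ℓ (resolvent A μ v) = 1 := by
  constructor
  · intro h
    obtain ⟨ψ, hψ, hψ0⟩ := h.exists_hasEigenvector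
    have heq : μ • ψ - A ψ = ℓ ψ • v := by
      rw [mem_eigenspace_iff] at hψ
      simp only [ContinuousLinearMap.toLinearMap_add, LinearMap.add_apply,
        ContinuousLinearMap.coe_coe, ContinuousLinearMap.smulRight_apply] at hψ
      rw [← hψ]; abel
    have hψv : ψ = ℓ ψ • resolvent A μ v := by
      rw [← map_smul, ← heq, resolvent_apply_smul_sub hμ]
    have hℓψ : ℓ ψ ≠ 0 := fun h0 => hψ0 (by rw [hψv, h0, zero_smul])
    apply mul_left_cancel₀ hℓψ
    rw [mul_one, ← smul_eq_mul, ← map_smul, ← hψv]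
  · intro h
    have hv0 : resolvent A μ v ≠ 0 := fun h0 => by simp [h0] at h
    refine hasEigenvalue_of_hasEigenvector ⟨mem_eigenspace_iff.2 ?_, hv0⟩
    have := smul_sub_apply_resolvent hμ v
    simp only [ContinuousLinearMap.toLinearMap_add, LinearMap.add_apply,
      ContinuousLinearMap.coe_coe, ContinuousLinearMap.smulRight_apply, h, one_smul]
    exact (sub_eq_iff_eq_add'.1 this).symm

end Resolvent

theorem IsSelfAdjoint.resolvent {R S : Type*} [CommSemiring R] [StarRing R] [Ring S] [StarRing S]
    [Algebra R S] [StarModule R S] {a : S} (ha : IsSelfAdjoint a) {r : R}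
    (hr : IsSelfAdjoint r) : IsSelfAdjoint (resolvent a r) :=
  ((IsSelfAdjoint.algebraMap S hr).sub ha).ringInverse

theorem Module.End.HasEigenvalue.exists_norm_eq_one_apply_eq_smul {𝕜 E : Type*} [RCLike 𝕜]
    [NormedAddCommGroup E] [NormedSpace 𝕜 E] {f : E →L[𝕜] E} {μ : 𝕜}
    (h : HasEigenvalue (f : E →ₗ[𝕜] E) μ) : ∃ v : E, ‖v‖ = 1 ∧ f v = μ • v := by
  obtain ⟨v, hv, hv0⟩ := h.exists_hasEigenvector
  refine ⟨(‖v‖⁻¹ : 𝕜) • v, norm_smul_inv_norm hv0, ?_⟩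
  have hfv : f v = μ • v := mem_eigenspace_iff.1 hv
  rw [map_smul, hfv, smul_comm]

section SelfAdjoint

variable {H : Type*} [NormedAddCommGroup H] [InnerProductSpace ℂ H] [CompleteSpace H]
  {A : H →L[ℂ] H}

theorem IsSelfAdjoint.inner_ne_zero_of_cyclic (hA : IsSelfAdjoint A) {φ : H}
    (hcyc : (Submodule.span ℂ (range fun n : ℕ => (A ^ n) φ)).topologicalClosure = ⊤)
    {ψ : H} (hψ0 : ψ ≠ 0) {x : ℂ} (hψ : A ψ = x • ψ) : ⟪ψ, φ⟫_ℂ ≠ 0 := by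
  intro hψφ
  have horth : ∀ n : ℕ, ⟪ψ, (A ^ n) φ⟫_ℂ = 0 := by
    intro n
    induction n with
    | zero => simpa using hψφ
    | succ n ih =>
      have hsym : ⟪A ψ, (A ^ n) φ⟫_ℂ = ⟪ψ, A ((A ^ n) φ)⟫_ℂ := hA.isSymmetric _ _
      rw [pow_succ', mul_apply_eq_comp, ← hsym, hψ, inner_smul_left, ih, mul_zero]
  have hspan : Submodule.span ℂ (range fun n : ℕ => (A ^ n) φ) ≤ (innerSL ℂ ψ).ker :=
    Submodule.span_le.2 <| by rintro _ ⟨n, rfl⟩; exact horth n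
  have hclosure := Submodule.topologicalClosure_minimal _ hspan (innerSL ℂ ψ).isClosed_ker
  rw [hcyc] at hclosure
  exact hψ0 (inner_self_eq_zero.1 (hclosure Submodule.mem_top))

theorem re_inner_resolvent_eq_of_eigenvector (hA : IsSelfAdjoint A) {ψ : H} (hψ1 : ‖ψ‖ = 1)
    {x : ℝ} (hψ : A ψ = (x : ℂ) • ψ) {t : ℝ} (ht : (t : ℂ) ∈ resolventSet ℂ A) (φ : H) :
    (⟪φ, resolvent A (t : ℂ) φ⟫_ℂ).re = ‖⟪ψ, φ⟫_ℂ‖ ^ 2 / (t - x) +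
      (⟪φ - ⟪ψ, φ⟫_ℂ • ψ, resolvent A (t : ℂ) (φ - ⟪ψ, φ⟫_ℂ • ψ)⟫_ℂ).re := by
  set c := ⟪ψ, φ⟫_ℂ
  set w := φ - c • ψ
  set R := resolvent A (t : ℂ)
  have hRψ : R ψ = ((t - x : ℝ) : ℂ)⁻¹ • ψ := by
    rw [resolvent_apply_of_apply_eq_smul ht hψ, Complex.ofReal_sub]
  have hψψ : ⟪ψ, ψ⟫_ℂ = 1 := by simp [inner_self_eq_norm_sq_to_K, hψ1]
  have hψw : ⟪ψ, w⟫_ℂ = 0 := by simp [w, c, hψ1]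
  have hwψ : ⟪w, ψ⟫_ℂ = 0 := by rw [← inner_conj_symm, hψw, map_zero]
  have hψRw : ⟪ψ, R w⟫_ℂ = 0 := by
    calc ⟪ψ, R w⟫_ℂ = ⟪R ψ, w⟫_ℂ :=
          ((hA.resolvent (Complex.conj_ofReal t)).isSymmetric ψ w).symm
      _ = 0 := by rw [hRψ, inner_smul_left, hψw, mul_zero]
  have hφ : φ = c • ψ + w := by simp [w]
  have hpole :
      c * (((t - x : ℝ) : ℂ)⁻¹ * (starRingEnd ℂ) c) = ((‖c‖ ^ 2 / (t - x) : ℝ) : ℂ) := by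
    rw [div_eq_mul_inv, Complex.ofReal_mul, Complex.ofReal_pow, ← Complex.mul_conj',
      Complex.ofReal_inv]
    ring
  rw [hφ, map_add, map_smul, hRψ]
  simp only [inner_add_left, inner_add_right, inner_smul_left, inner_smul_right, hψψ, hwψ,
    hψRw, mul_one, mul_zero, add_zero, zero_add, hpole, Complex.add_re, Complex.ofReal_re]

theorem hasDerivAt_re_inner_resolvent (hA : IsSelfAdjoint A) (w : H) {t : ℝ}
    (ht : (t : ℂ) ∈ resolventSet ℂ A) :
    HasDerivAt (fun s : ℝ => (⟪w, resolvent A (s : ℂ) w⟫_ℂ).re)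
      (-‖resolvent A (t : ℂ) w‖ ^ 2) t := by
  let L : (H →L[ℂ] H) →L[ℂ] ℂ := (innerSL ℂ w).comp (ContinuousLinearMap.apply ℂ H w)
  have h := (L.hasFDerivAt.comp_hasDerivAt _
    (spectrum.hasDerivAt_resolvent_const_left ht)).real_of_complex
  refine h.congr_deriv ?_
  have hsym := (hA.resolvent (Complex.conj_ofReal t)).isSymmetric
  have hL : L (-resolvent A (t : ℂ) ^ 2) =
      -⟪resolvent A (t : ℂ) w, resolvent A (t : ℂ) w⟫_ℂ := by
    simp only [L, sq, ContinuousLinearMap.comp_apply, ContinuousLinearMap.apply_apply,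
      neg_apply, mul_apply_eq_comp, coe_innerSL_apply, inner_neg_right]
    exact congrArg Neg.neg (hsym w _).symm
  rw [hL, Complex.neg_re, ← RCLike.re_to_complex, inner_self_eq_norm_sq]

theorem antitoneOn_re_inner_resolvent (hA : IsSelfAdjoint A) (w : H) {s : Set ℝ}
    (hs : Convex ℝ s) (hres : ∀ t ∈ s, (t : ℂ) ∈ resolventSet ℂ A) :
    AntitoneOn (fun t : ℝ => (⟪w, resolvent A (t : ℂ) w⟫_ℂ).re) s := by
  have hd t (ht : t ∈ s) := hasDerivAt_re_inner_resolvent hA w (hres t ht)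
  exact antitoneOn_of_hasDerivWithinAt_nonpos hs
    (fun t ht => (hd t ht).continuousAt.continuousWithinAt)
    (fun t ht => (hd t (interior_subset ht)).hasDerivWithinAt)
    (fun _ _ => neg_nonpos.2 (sq_nonneg _))

theorem strictAntiOn_re_inner_resolvent (hA : IsSelfAdjoint A) {w : H} (hw : w ≠ 0) {s : Set ℝ}
    (hs : Convex ℝ s) (hres : ∀ t ∈ s, (t : ℂ) ∈ resolventSet ℂ A) :
    StrictAntiOn (fun t : ℝ => (⟪w, resolvent A (t : ℂ) w⟫_ℂ).re) s := by
  have hd t (ht : t ∈ s) := hasDerivAt_re_inner_resolvent hA w (hres t ht)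
  exact strictAntiOn_of_hasDerivWithinAt_neg hs
    (fun t ht => (hd t ht).continuousAt.continuousWithinAt)
    (fun t ht => (hd t (interior_subset ht)).hasDerivWithinAt)
    (fun t ht => neg_neg_of_pos <| pow_pos (norm_pos_iff.2 <|
      resolvent_apply_ne_zero (hres t (interior_subset ht)) hw) 2)

theorem tendsto_re_inner_resolvent_nhdsGT_atTop (hA : IsSelfAdjoint A) {ψ : H} (hψ1 : ‖ψ‖ = 1)
    {x₁ x₂ : ℝ} (hψ : A ψ = (x₁ : ℂ) • ψ) (h12 : x₁ < x₂)
    (hres : ∀ t ∈ Ioo x₁ x₂, (t : ℂ) ∈ resolventSet ℂ A) {φ : H} (hψφ : ⟪ψ, φ⟫_ℂ ≠ 0) :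
    Tendsto (fun t : ℝ => (⟪φ, resolvent A (t : ℂ) φ⟫_ℂ).re) (𝓝[>] x₁) atTop := by
  set w := φ - ⟪ψ, φ⟫_ℂ • ψ
  set g := fun t : ℝ => (⟪w, resolvent A (t : ℂ) w⟫_ℂ).re
  obtain ⟨m, hm⟩ := nonempty_Ioo.2 h12
  have hpole : Tendsto (fun t => ‖⟪ψ, φ⟫_ℂ‖ ^ 2 * (t - x₁)⁻¹ + g m) (𝓝[>] x₁) atTop := by
    refine tendsto_atTop_add_const_right _ _ (Tendsto.const_mul_atTop (by positivity) ?_)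
    refine Tendsto.inv_tendsto_nhdsGT_zero ?_
    exact tendsto_nhdsWithin_iff.2
      ⟨((continuous_sub_right x₁).tendsto' x₁ 0 (sub_self x₁)).mono_left nhdsWithin_le_nhds,
        eventually_nhdsWithin_of_forall fun _ ht => sub_pos.2 (mem_Ioi.1 ht)⟩
  refine tendsto_atTop_mono' _ ?_ hpole
  filter_upwards [Ioo_mem_nhdsGT hm.1] with t ht
  have htI : t ∈ Ioo x₁ x₂ := ⟨ht.1, ht.2.trans hm.2⟩
  rw [re_inner_resolvent_eq_of_eigenvector hA hψ1 hψ (hres t htI), div_eq_mul_inv]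
  gcongr
  exact antitoneOn_re_inner_resolvent hA w (convex_Ioo x₁ x₂) hres htI hm ht.2.le

theorem tendsto_re_inner_resolvent_nhdsLT_atBot (hA : IsSelfAdjoint A) {ψ : H} (hψ1 : ‖ψ‖ = 1)
    {x₁ x₂ : ℝ} (hψ : A ψ = (x₂ : ℂ) • ψ) (h12 : x₁ < x₂)
    (hres : ∀ t ∈ Ioo x₁ x₂, (t : ℂ) ∈ resolventSet ℂ A) {φ : H} (hψφ : ⟪ψ, φ⟫_ℂ ≠ 0) :
    Tendsto (fun t : ℝ => (⟪φ, resolvent A (t : ℂ) φ⟫_ℂ).re) (𝓝[<] x₂) atBot := by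
  set w := φ - ⟪ψ, φ⟫_ℂ • ψ
  set g := fun t : ℝ => (⟪w, resolvent A (t : ℂ) w⟫_ℂ).re
  obtain ⟨m, hm⟩ := nonempty_Ioo.2 h12
  have hpole : Tendsto (fun t => ‖⟪ψ, φ⟫_ℂ‖ ^ 2 * (t - x₂)⁻¹ + g m) (𝓝[<] x₂) atBot := by
    refine tendsto_atBot_add_const_right _ _ (Tendsto.const_mul_atBot (by positivity) ?_)
    refine Tendsto.inv_tendsto_nhdsLT_zero ?_
    exact tendsto_nhdsWithin_iff.2
      ⟨((continuous_sub_right x₂).tendsto' x₂ 0 (sub_self x₂)).mono_left nhdsWithin_le_nhds,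
        eventually_nhdsWithin_of_forall fun _ ht => sub_neg.2 (mem_Iio.1 ht)⟩
  refine tendsto_atBot_mono' _ ?_ hpole
  filter_upwards [Ioo_mem_nhdsLT hm.2] with t ht
  have htI : t ∈ Ioo x₁ x₂ := ⟨hm.1.trans ht.1, ht.2⟩
  rw [re_inner_resolvent_eq_of_eigenvector hA hψ1 hψ (hres t htI), div_eq_mul_inv]
  gcongr
  exact antitoneOn_re_inner_resolvent hA w (convex_Ioo x₁ x₂) hres hm htI ht.1.le

end SelfAdjoint

theorem stmt_6 {H : Type*} [NormedAddCommGroup H] [InnerProductSpace ℂ H] [CompleteSpace H]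
    (A : H →L[ℂ] H) (hA : IsSelfAdjoint A) (φ : H)
    -- `φ` is cyclic for `A`
    (hcyc : (Submodule.span ℂ (Set.range fun n : ℕ => (A ^ n) φ)).topologicalClosure = ⊤)
    -- `B = ⟨φ,·⟩φ`
    (B : H →L[ℂ] H) (hB : B = (innerSL ℂ φ).smulRight φ)
    (x₁ x₂ : ℝ) (h12 : x₁ < x₂)
    (he1 : Module.End.HasEigenvalue (A : H →ₗ[ℂ] H) (x₁ : ℂ))
    (he2 : Module.End.HasEigenvalue (A : H →ₗ[ℂ] H) (x₂ : ℂ))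
    (hgap : ∀ E ∈ Set.Ioo x₁ x₂, (E : ℂ) ∉ spectrum ℂ A) :
    ∃! E : ℝ, E ∈ Set.Ioo x₁ x₂ ∧
      Module.End.HasEigenvalue ((A + B : H →L[ℂ] H) : H →ₗ[ℂ] H) (E : ℂ) := by
  obtain ⟨ψ₁, hψ₁1, hψ₁⟩ := he1.exists_norm_eq_one_apply_eq_smul
  obtain ⟨ψ₂, hψ₂1, hψ₂⟩ := he2.exists_norm_eq_one_apply_eq_smul
  have hψ₁φ := hA.inner_ne_zero_of_cyclic hcyc (norm_ne_zero_iff.1 (by simp [hψ₁1])) hψ₁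
  have hψ₂φ := hA.inner_ne_zero_of_cyclic hcyc (norm_ne_zero_iff.1 (by simp [hψ₂1])) hψ₂
  have hφ0 : φ ≠ 0 := by rintro rfl; simp at hψ₁φ
  have hres : ∀ t ∈ Ioo x₁ x₂, (t : ℂ) ∈ resolventSet ℂ A := fun t ht =>
    spectrum.mem_resolventSet_iff.2 (spectrum.notMem_iff.1 (hgap t ht))
  set f := fun t : ℝ => (⟪φ, resolvent A (t : ℂ) φ⟫_ℂ).re
  have hanti : StrictAntiOn f (Ioo x₁ x₂) :=
    strictAntiOn_re_inner_resolvent hA hφ0 (convex_Ioo x₁ x₂) hres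
  have heig : ∀ t ∈ Ioo x₁ x₂,
      HasEigenvalue ((A + B : H →L[ℂ] H) : H →ₗ[ℂ] H) (t : ℂ) ↔ f t = 1 := fun t ht => by
    have hreal : ((f t : ℝ) : ℂ) = ⟪φ, resolvent A (t : ℂ) φ⟫_ℂ :=
      (hA.resolvent (Complex.conj_ofReal t)).isSymmetric.coe_re_inner_self_apply φ
    rw [hB, hasEigenvalue_add_smulRight_iff (hres t ht), innerSL_apply_apply, ← hreal,
      Complex.ofReal_eq_one]
  obtain ⟨E, hE, hfE⟩ := ContinuousOn.surjOn_of_tendsto' (nonempty_Ioo.2 h12)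
    (fun t ht => (hasDerivAt_re_inner_resolvent hA φ (hres t ht)).continuousAt.continuousWithinAt)
    ((tendsto_comp_coe_Ioo_atBot (f := f) h12).2
      (tendsto_re_inner_resolvent_nhdsGT_atTop hA hψ₁1 hψ₁ h12 hres hψ₁φ))
    ((tendsto_comp_coe_Ioo_atTop (f := f) h12).2
      (tendsto_re_inner_resolvent_nhdsLT_atBot hA hψ₂1 hψ₂ h12 hres hψ₂φ))
    (mem_univ 1)
  exact ⟨E, ⟨hE, (heig E hE).2 hfE⟩, fun E' ⟨hE', hev⟩ =>
    hanti.injOn hE' hE (((heig E' hE').1 hev).trans hfE.symm)⟩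
end

section
/- Let c > 0 and define g(x,y) = e^{−c‖x−y‖}/‖x−y‖ for x ≠ y in ℝ³. Then there exist constants C > 0 and c' ∈ (0, c) such that for all k, m ∈ ℝ³ with k ≠ m: ∫_{ℝ³} g(x,k) g(x,m) dx ≤ C e^{−c'‖k−m‖}. -/
/-!
By the triangle inequality `‖k - m‖ ≤ ‖x - k‖ + ‖x - m‖`, half of the decay of the two kernels
pays for the factor `e^{-(c/2)‖k - m‖}`, and AM-GM gives `1/(ab) ≤ (1/a² + 1/b²)/2`. The integrand
is thus bounded by `e^{-(c/2)‖k - m‖}` times the average of two translates of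
`e^{-(c/2)‖x‖}/‖x‖²`, which is integrable in dimension three.
-/

open MeasureTheory Real Module

lemma exp_div_mul_exp_div_le {c a b d : ℝ} (hc : 0 ≤ c) (ha : 0 ≤ a) (hb : 0 ≤ b)
    (hd : d ≤ a + b) :
    exp (-c * a) / a * (exp (-c * b) / b) ≤
      exp (-(c / 2) * d) * ((exp (-(c / 2) * a) / a ^ 2 + exp (-(c / 2) * b) / b ^ 2) / 2) := by
  rcases ha.eq_or_lt with rfl | ha
  · simp only [div_zero, zero_mul]; positivity
  rcases hb.eq_or_lt with rfl | hb
  · simp only [div_zero, mul_zero]; positivity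
  set ea := exp (-(c / 2) * a)
  set eb := exp (-(c / 2) * b)
  have hsplit : exp (-c * a) * exp (-c * b) ≤ exp (-(c / 2) * d) * (ea * eb) := by
    simp only [ea, eb, ← exp_add]
    exact exp_le_exp.2 (by nlinarith)
  have hamgm : 1 / a * (1 / b) ≤ (1 / a ^ 2 + 1 / b ^ 2) / 2 := by
    have := two_mul_le_add_sq (1 / a) (1 / b)
    rw [one_div_pow, one_div_pow] at this
    linarith
  have hea : ea ≤ 1 := exp_le_one_iff.2 (by nlinarith)
  have heb : eb ≤ 1 := exp_le_one_iff.2 (by nlinarith)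
  calc exp (-c * a) / a * (exp (-c * b) / b)
      = exp (-c * a) * exp (-c * b) * (1 / a * (1 / b)) := by ring
    _ ≤ exp (-(c / 2) * d) * (ea * eb) * ((1 / a ^ 2 + 1 / b ^ 2) / 2) := by gcongr
    _ = exp (-(c / 2) * d) * ((ea * eb / a ^ 2 + ea * eb / b ^ 2) / 2) := by ring
    _ ≤ exp (-(c / 2) * d) * ((ea / a ^ 2 + eb / b ^ 2) / 2) := by
        gcongr
        · exact mul_le_of_le_one_right (exp_pos _).le heb
        · exact mul_le_of_le_one_left (exp_pos _).le hea

lemma integrable_exp_neg_mul_norm_div_norm_sq {E : Type*} [NormedAddCommGroup E]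
    [NormedSpace ℝ E] [MeasurableSpace E] [BorelSpace E] [FiniteDimensional ℝ E]
    (hE : finrank ℝ E = 3) (μ : Measure E) [μ.IsAddHaarMeasure] {b : ℝ} (hb : 0 < b) :
    Integrable (fun x : E => exp (-b * ‖x‖) / ‖x‖ ^ 2) μ := by
  have : Nontrivial E := Module.nontrivial_of_finrank_eq_succ hE
  rw [integrable_fun_norm_addHaar μ (f := fun r => exp (-b * r) / r ^ 2), hE]
  refine (exp_neg_integrableOn_Ioi 0 hb).congr_fun (fun r (hr : 0 < r) => ?_) measurableSet_Ioi
  rw [smul_eq_mul, show 3 - 1 = 2 from rfl]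
  field_simp

theorem integral_exp_div_mul_exp_div_le {E : Type*} [NormedAddCommGroup E]
    [NormedSpace ℝ E] [MeasurableSpace E] [BorelSpace E] [FiniteDimensional ℝ E]
    (hE : finrank ℝ E = 3) (μ : Measure E) [μ.IsAddHaarMeasure] {c : ℝ} (hc : 0 < c)
    (k m : E) :
    ∫ x, exp (-c * ‖x - k‖) / ‖x - k‖ * (exp (-c * ‖x - m‖) / ‖x - m‖) ∂μ ≤
      (∫ x, exp (-(c / 2) * ‖x‖) / ‖x‖ ^ 2 ∂μ) * exp (-(c / 2) * ‖k - m‖) := by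
  set W : E → ℝ := fun x => exp (-(c / 2) * ‖x‖) / ‖x‖ ^ 2
  have hW := integrable_exp_neg_mul_norm_div_norm_sq hE μ (half_pos hc)
  have hWk : Integrable (fun x => W (x - k)) μ := hW.comp_sub_right k
  have hWm : Integrable (fun x => W (x - m)) μ := hW.comp_sub_right m
  calc ∫ x, exp (-c * ‖x - k‖) / ‖x - k‖ * (exp (-c * ‖x - m‖) / ‖x - m‖) ∂μ
      ≤ ∫ x, exp (-(c / 2) * ‖k - m‖) * ((W (x - k) + W (x - m)) / 2) ∂μ := by
        refine integral_mono_of_nonneg (.of_forall fun x => by positivity)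
          (((hWk.add hWm).div_const 2).const_mul _) (.of_forall fun x => ?_)
        refine exp_div_mul_exp_div_le hc.le (norm_nonneg _) (norm_nonneg _) ?_
        simpa only [norm_sub_rev x k] using norm_sub_le_norm_sub_add_norm_sub k x m
    _ = (∫ x, W x ∂μ) * exp (-(c / 2) * ‖k - m‖) := by
        rw [integral_const_mul, integral_div, integral_add hWk hWm,
          integral_sub_right_eq_self W k, integral_sub_right_eq_self W m]
        ring

theorem stmt_18 (c : ℝ) (hc : 0 < c) :
    ∃ C > (0 : ℝ), ∃ c' ∈ Set.Ioo (0 : ℝ) c,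
      ∀ k m : EuclideanSpace ℝ (Fin 3), k ≠ m →
        ∫ x : EuclideanSpace ℝ (Fin 3),
            (Real.exp (-c * ‖x - k‖) / ‖x - k‖) * (Real.exp (-c * ‖x - m‖) / ‖x - m‖) ≤
          C * Real.exp (-c' * ‖k - m‖) := by
  set I := ∫ x : EuclideanSpace ℝ (Fin 3), exp (-(c / 2) * ‖x‖) / ‖x‖ ^ 2
  have hI : 0 ≤ I := integral_nonneg fun x => by positivity
  refine ⟨I + 1, by linarith, c / 2, ⟨half_pos hc, half_lt_self hc⟩, fun k m _ => ?_⟩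
  calc _ ≤ I * exp (-(c / 2) * ‖k - m‖) :=
        integral_exp_div_mul_exp_div_le finrank_euclideanSpace_fin volume hc k m
    _ ≤ (I + 1) * exp (-(c / 2) * ‖k - m‖) := by gcongr; linarith
end
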